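/- arXiv:1510.04228 — 2 statements merged into one kernel-verified Lean document; each statement's English description precedes it below -/
import Mathlib

section
/- Let n ≥ 1 and let K ⊆ ℝ^{n+1} be a convex cone (containing 0) in Minkowski space E^{n+1}_1 such that every nonzero element of K is spacelike. Then there exist a nonzero vector w ∈ F ∩ K* and a nonzero vector w′ ∈ P ∩ K*. -/
open Set Pointwise

/-- The Minkowski bilinear form on `ℝ^(n+1)`:
`⟪x,y⟫ = x₁y₁ + ⋯ + xₙyₙ − x_{n+1}y_{n+1}`. -/
def mink {n : ℕ} (x y : EuclideanSpace ℝ (Fin (n + 1))) : ℝ :=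
  (∑ i : Fin n, x i.castSucc * y i.castSucc) - x (Fin.last n) * y (Fin.last n)

/-- The closed future cone in Minkowski space. -/
def futureCone (n : ℕ) : Set (EuclideanSpace ℝ (Fin (n + 1))) :=
  {v | mink v v ≤ 0 ∧ 0 ≤ v (Fin.last n)}

/-- The closed past cone in Minkowski space: `P = -F`. -/
def pastCone (n : ℕ) : Set (EuclideanSpace ℝ (Fin (n + 1))) :=
  -futureCone n

/-- The dual cone of a set with respect to the Minkowski form. -/
def minkDual {n : ℕ} (K : Set (EuclideanSpace ℝ (Fin (n + 1)))) :
    Set (EuclideanSpace ℝ (Fin (n + 1))) :=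
  {xs | ∀ x ∈ K, 0 ≤ mink xs x}

/-!
The open future cone `U = {x | ‖x_space‖ < x_time}` is open, convex and, consisting of timelike
vectors, disjoint from `K`. Hahn–Banach separates `U` from the cone `K` by a linear functional that
is negative on `U` and nonnegative on `K`; writing it as `mink w ·` puts `w` in `K*`, and
negativity on all of `U` forces `w` into the closed future cone. Applying this to `-K` and
negating the resulting vector gives the past one.
-/

open InnerProductSpace

theorem geometric_hahn_banach_open_cone {E : Type*} [TopologicalSpace E] [AddCommGroup E]
    [Module ℝ E] [IsTopologicalAddGroup E] [ContinuousSMul ℝ E]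
    {U K : Set E} (hUconv : Convex ℝ U) (hUopen : IsOpen U) (hKconv : Convex ℝ K)
    (h0 : (0 : E) ∈ K) (hcone : ∀ c : ℝ, 0 ≤ c → ∀ x ∈ K, c • x ∈ K) (hUK : Disjoint U K) :
    ∃ f : StrongDual ℝ E, (∀ x ∈ U, f x < 0) ∧ ∀ x ∈ K, 0 ≤ f x := by
  obtain ⟨f, u, hfU, hfK⟩ := geometric_hahn_banach_open hUconv hUopen hKconv hUK
  have hu : u ≤ 0 := by simpa using hfK 0 h0
  refine ⟨f, fun x hx => (hfU x hx).trans_le hu, fun x hx => ?_⟩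
  by_contra! hfx
  -- scaling `x` pushes `f` below any bound
  have hc : 0 ≤ (u - 1) / f x := div_nonneg_of_nonpos (by linarith) hfx.le
  have := hfK _ (hcone _ hc x hx)
  rw [map_smul, smul_eq_mul, div_mul_cancel₀ _ hfx.ne] at this
  linarith

section Minkowski

variable {n : ℕ}

def spatial (n : ℕ) : EuclideanSpace ℝ (Fin (n + 1)) →ₗ[ℝ] EuclideanSpace ℝ (Fin n) where
  toFun x := WithLp.toLp 2 fun i => x i.castSucc
  map_add' _ _ := rfl
  map_smul' _ _ := rfl

@[simp]
theorem spatial_apply (x : EuclideanSpace ℝ (Fin (n + 1))) (i : Fin n) :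
    spatial n x i = x i.castSucc := rfl

def ofSpaceTime (s : EuclideanSpace ℝ (Fin n)) (t : ℝ) : EuclideanSpace ℝ (Fin (n + 1)) :=
  WithLp.toLp 2 (Fin.snoc (α := fun _ => ℝ) (fun i => s i) t)

@[simp]
theorem spatial_ofSpaceTime (s : EuclideanSpace ℝ (Fin n)) (t : ℝ) :
    spatial n (ofSpaceTime s t) = s := by
  ext i; simp [ofSpaceTime]

@[simp]
theorem ofSpaceTime_last (s : EuclideanSpace ℝ (Fin n)) (t : ℝ) :
    ofSpaceTime s t (Fin.last n) = t := by
  simp [ofSpaceTime]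

theorem inner_eq_inner_spatial_add (x y : EuclideanSpace ℝ (Fin (n + 1))) :
    ⟪x, y⟫_ℝ = ⟪spatial n x, spatial n y⟫_ℝ + x (Fin.last n) * y (Fin.last n) := by
  simp [PiLp.inner_apply, Fin.sum_univ_castSucc, mul_comm]

theorem mink_eq_inner_spatial_sub (x y : EuclideanSpace ℝ (Fin (n + 1))) :
    mink x y = ⟪spatial n x, spatial n y⟫_ℝ - x (Fin.last n) * y (Fin.last n) := by
  simp [mink, PiLp.inner_apply, mul_comm]

theorem mink_self (x : EuclideanSpace ℝ (Fin (n + 1))) :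
    mink x x = ‖spatial n x‖ ^ 2 - x (Fin.last n) ^ 2 := by
  rw [mink_eq_inner_spatial_sub, real_inner_self_eq_norm_sq]; ring

theorem mink_neg_left (x y : EuclideanSpace ℝ (Fin (n + 1))) : mink (-x) y = -mink x y := by
  simp [mink_eq_inner_spatial_sub]; ring

theorem mink_neg_right (x y : EuclideanSpace ℝ (Fin (n + 1))) : mink x (-y) = -mink x y := by
  simp [mink_eq_inner_spatial_sub]; ring

theorem exists_mink_eq (f : StrongDual ℝ (EuclideanSpace ℝ (Fin (n + 1)))) :
    ∃ w, ∀ x, mink w x = f x := by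
  obtain ⟨v, rfl⟩ := (toDual ℝ _).surjective f
  refine ⟨ofSpaceTime (spatial n v) (-v (Fin.last n)), fun x => ?_⟩
  rw [toDual_apply_apply, inner_eq_inner_spatial_add, mink_eq_inner_spatial_sub]
  simp

def openFutureCone (n : ℕ) : Set (EuclideanSpace ℝ (Fin (n + 1))) :=
  {x | ‖spatial n x‖ < x (Fin.last n)}

theorem isOpen_openFutureCone : IsOpen (openFutureCone n) :=
  isOpen_lt ((spatial n).continuous_of_finiteDimensional.norm) (by fun_prop)

theorem convex_openFutureCone : Convex ℝ (openFutureCone n) := by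
  have h := (((convexOn_norm convex_univ).comp_linearMap (spatial n)).sub
    ((EuclideanSpace.proj (Fin.last n) : EuclideanSpace ℝ (Fin (n + 1)) →L[ℝ] ℝ).toLinearMap
      |>.concaveOn convex_univ)).convex_lt 0
  simpa [openFutureCone] using h

theorem mink_self_neg_of_mem_openFutureCone {x : EuclideanSpace ℝ (Fin (n + 1))}
    (hx : x ∈ openFutureCone n) : mink x x < 0 := by
  rw [mink_self, sub_neg]
  exact pow_lt_pow_left₀ hx (norm_nonneg _) two_ne_zero

theorem ne_zero_of_mem_openFutureCone {x : EuclideanSpace ℝ (Fin (n + 1))}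
    (hx : x ∈ openFutureCone n) : x ≠ 0 := by
  rintro rfl
  simp [openFutureCone] at hx

theorem ofSpaceTime_mem_openFutureCone {s : EuclideanSpace ℝ (Fin n)} {t : ℝ} (h : ‖s‖ < t) :
    ofSpaceTime s t ∈ openFutureCone n := by
  simpa [openFutureCone] using h

theorem ne_zero_and_mem_futureCone_of_mink_neg {w : EuclideanSpace ℝ (Fin (n + 1))}
    (hw : ∀ x ∈ openFutureCone n, mink w x < 0) : w ≠ 0 ∧ w ∈ futureCone n := by
  have ht : 0 < w (Fin.last n) := by
    have h01 : ‖(0 : EuclideanSpace ℝ (Fin n))‖ < 1 := by simp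
    simpa [mink_eq_inner_spatial_sub] using hw _ (ofSpaceTime_mem_openFutureCone h01)
  refine ⟨fun h => by simp [h] at ht, ?_, ht.le⟩
  rw [mink_self, sub_nonpos]
  refine pow_le_pow_left₀ (norm_nonneg _) (not_lt.1 fun hta => ?_) 2
  -- this vector is future timelike but Minkowski-orthogonal to `w`
  have hx : ‖w (Fin.last n) • spatial n w‖ < ‖spatial n w‖ ^ 2 := by
    rw [norm_smul, Real.norm_of_nonneg ht.le, sq]
    exact mul_lt_mul_of_pos_right hta (ht.trans hta)
  have := hw _ (ofSpaceTime_mem_openFutureCone hx)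
  simp [mink_eq_inner_spatial_sub, inner_smul_right] at this

theorem exists_ne_zero_mem_futureCone_inter_minkDual {K : Set (EuclideanSpace ℝ (Fin (n + 1)))}
    (h0 : 0 ∈ K) (hconv : Convex ℝ K) (hcone : ∀ c : ℝ, 0 ≤ c → ∀ x ∈ K, c • x ∈ K)
    (hspace : ∀ x ∈ K, x ≠ 0 → 0 < mink x x) :
    ∃ w, w ≠ 0 ∧ w ∈ futureCone n ∩ minkDual K := by
  have hdisj : Disjoint (openFutureCone n) K := Set.disjoint_left.2 fun x hx hxK =>
    (hspace x hxK (ne_zero_of_mem_openFutureCone hx)).not_gt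
      (mink_self_neg_of_mem_openFutureCone hx)
  obtain ⟨f, hfU, hfK⟩ := geometric_hahn_banach_open_cone convex_openFutureCone
    isOpen_openFutureCone hconv h0 hcone hdisj
  obtain ⟨w, hw⟩ := exists_mink_eq f
  obtain ⟨hw0, hwF⟩ := ne_zero_and_mem_futureCone_of_mink_neg fun x hx => hw x ▸ hfU x hx
  exact ⟨w, hw0, hwF, fun x hx => hw x ▸ hfK x hx⟩

end Minkowski

theorem stmt_6_general (n : ℕ)
    (K : Set (EuclideanSpace ℝ (Fin (n + 1))))
    (h0 : (0 : EuclideanSpace ℝ (Fin (n + 1))) ∈ K)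
    (hconv : Convex ℝ K)
    (hcone : ∀ c : ℝ, 0 ≤ c → ∀ x ∈ K, c • x ∈ K)
    (hspace : ∀ x ∈ K, x ≠ 0 → 0 < mink x x) :
    (∃ w, w ≠ 0 ∧ w ∈ futureCone n ∩ minkDual K) ∧
    (∃ w', w' ≠ 0 ∧ w' ∈ pastCone n ∩ minkDual K) := by
  refine ⟨exists_ne_zero_mem_futureCone_inter_minkDual h0 hconv hcone hspace, ?_⟩
  obtain ⟨w, hw0, hwF, hwK⟩ := exists_ne_zero_mem_futureCone_inter_minkDual (K := -K)
    (by simpa using h0) hconv.neg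
    (fun c hc x hx => by simpa [smul_neg] using hcone c hc (-x) hx)
    (fun x hx hx0 => by
      simpa [mink_neg_left, mink_neg_right] using hspace (-x) hx (neg_ne_zero.2 hx0))
  refine ⟨-w, neg_ne_zero.2 hw0, by simpa [pastCone] using hwF, fun x hx => ?_⟩
  simpa [mink_neg_left, mink_neg_right] using hwK (-x) (by simpa using hx)

theorem stmt_6 (n : ℕ) (hn : 1 ≤ n)
    (K : Set (EuclideanSpace ℝ (Fin (n + 1))))
    (h0 : (0 : EuclideanSpace ℝ (Fin (n + 1))) ∈ K)
    (hconv : Convex ℝ K)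
    (hcone : ∀ c : ℝ, 0 ≤ c → ∀ x ∈ K, c • x ∈ K)
    (hspace : ∀ x ∈ K, x ≠ 0 → 0 < mink x x) :
    (∃ w, w ≠ 0 ∧ w ∈ futureCone n ∩ minkDual K) ∧
    (∃ w', w' ≠ 0 ∧ w' ∈ pastCone n ∩ minkDual K) :=
  stmt_6_general n K h0 hconv hcone hspace
end

section
/- Let m ≥ 1, let ⟪·,·⟫ be a nondegenerate symmetric bilinear form on ℝ^m, let B ⊆ ℝ^m be a convex body, and let N and R be the normal cone and recession cone of B. Then N* = R. If moreover B ≠ ℝ^m, then R* equals the topological closure of N; in particular the closure of N is a convex cone. -/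
open Set

/-- The dual cone of a set `K` with respect to a bilinear form `form`. -/
def dualCone {m : ℕ}
    (form : EuclideanSpace ℝ (Fin m) →ₗ[ℝ] EuclideanSpace ℝ (Fin m) →ₗ[ℝ] ℝ)
    (K : Set (EuclideanSpace ℝ (Fin m))) : Set (EuclideanSpace ℝ (Fin m)) :=
  {xs | ∀ x ∈ K, 0 ≤ form xs x}

/-- The normal cone of a convex body `B` with respect to a bilinear form `form`. -/
def normalCone {m : ℕ}
    (form : EuclideanSpace ℝ (Fin m) →ₗ[ℝ] EuclideanSpace ℝ (Fin m) →ₗ[ℝ] ℝ)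
    (B : Set (EuclideanSpace ℝ (Fin m))) : Set (EuclideanSpace ℝ (Fin m)) :=
  {w | w ≠ 0 ∧ ∃ p ∈ frontier B, ∀ x ∈ B, 0 ≤ form (x - p) w}

/-- The recession cone of a convex body `B`. -/
def recessionCone {m : ℕ} (B : Set (EuclideanSpace ℝ (Fin m))) :
    Set (EuclideanSpace ℝ (Fin m)) :=
  {v | ∀ x ∈ B, ∀ t : ℝ, 0 ≤ t → x + t • v ∈ B}

/-!
Writing `form x y = ⟪Φ x, y⟫` for a linear automorphism `Φ` turns each cone into the preimage
under `Φ` of its Euclidean counterpart, so it suffices to argue with the inner product.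
Projecting a point `y ∉ B` to its nearest point `p ∈ B` yields the normal `p - y`; when
`y = x + t • v` with `x ∈ B`, this normal pairs negatively with `v`, which gives `N* ⊆ R`.
Conversely every `v ∈ R` pairs nonnegatively even with each `u` for which `⟪u, ·⟫` is bounded
below on `B`, so `R` is also the dual of that larger cone, and by the bipolar theorem `R*` is
its closure. Projecting `x₀ - r • u` for large `r` yields normals `ν` with `ν / r → u`, so this
larger cone lies in the closure of `N`.
-/

open Filter Topology ProperCone
open scoped RealInnerProductSpace

section InnerProductSpace

variable {E : Type*} [NormedAddCommGroup E] [InnerProductSpace ℝ E] {B : Set E} {u p : E}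

def innerNormalCone (B : Set E) : Set E :=
  {u | u ≠ 0 ∧ ∃ p ∈ frontier B, ∀ x ∈ B, 0 ≤ ⟪u, x - p⟫}

/-- The barrier cone of `B`, with lower instead of upper bounds. -/
def boundedBelowCone (B : Set E) : PointedCone ℝ E where
  carrier := {u | ∃ c, ∀ x ∈ B, c ≤ ⟪u, x⟫}
  zero_mem' := ⟨0, fun x _ => by rw [inner_zero_left]⟩
  add_mem' := by
    rintro u v ⟨c, hc⟩ ⟨d, hd⟩
    exact ⟨c + d, fun x hx => by rw [inner_add_left]; exact add_le_add (hc x hx) (hd x hx)⟩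
  smul_mem' := by
    rintro a u ⟨c, hc⟩
    exact ⟨a * c, fun x hx => by
      change (a : ℝ) * c ≤ ⟪(a : ℝ) • u, x⟫
      rw [real_inner_smul_left]; exact mul_le_mul_of_nonneg_left (hc x hx) a.2⟩

lemma smul_mem_innerNormalCone {c : ℝ} (hc : 0 < c) (hu : u ∈ innerNormalCone B) :
    c • u ∈ innerNormalCone B := by
  obtain ⟨hu0, p, hp, hpB⟩ := hu
  exact ⟨smul_ne_zero hc.ne' hu0, p, hp, fun x hx => by
    rw [real_inner_smul_left]; exact mul_nonneg hc.le (hpB x hx)⟩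

lemma zero_mem_closure_innerNormalCone (hN : (innerNormalCone B).Nonempty) :
    0 ∈ closure (innerNormalCone B) := by
  obtain ⟨u, hu⟩ := hN
  have hlim : Tendsto (fun t : ℝ => t • u) (𝓝[>] 0) (𝓝 0) := by
    simpa using (tendsto_id.smul_const u).mono_left (nhdsWithin_le_nhds (a := (0 : ℝ)))
  exact mem_closure_of_tendsto hlim
    (eventually_nhdsWithin_of_forall fun t ht => smul_mem_innerNormalCone ht hu)

lemma notMem_interior_of_forall_inner_sub_nonneg (hu : u ≠ 0)
    (h : ∀ x ∈ B, 0 ≤ ⟪u, x - p⟫) : p ∉ interior B := by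
  intro hp
  have hline : ∀ᶠ t in 𝓝[<] (0 : ℝ), p + t • u ∈ B := by
    have hcont : Tendsto (fun t : ℝ => p + t • u) (𝓝[<] 0) (𝓝 p) := by
      simpa using ((tendsto_id.smul_const u).const_add p).mono_left
        (nhdsWithin_le_nhds (a := (0 : ℝ)))
    exact (hcont.eventually_mem (isOpen_interior.mem_nhds hp)).mono fun _ ht => interior_subset ht
  obtain ⟨t, ht, htB⟩ := (hline.and self_mem_nhdsWithin).exists
  have := h _ ht
  rw [add_sub_cancel_left, real_inner_smul_right, real_inner_self_eq_norm_sq] at this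
  have : 0 < ‖u‖ ^ 2 := by positivity
  nlinarith [show t < 0 from htB]

lemma mem_innerNormalCone_of_forall_inner_sub_nonneg (hu : u ≠ 0) (hp : p ∈ B)
    (h : ∀ x ∈ B, 0 ≤ ⟪u, x - p⟫) : u ∈ innerNormalCone B :=
  ⟨hu, p, ⟨subset_closure hp, notMem_interior_of_forall_inner_sub_nonneg hu h⟩, h⟩

lemma innerNormalCone_subset_boundedBelowCone :
    innerNormalCone B ⊆ boundedBelowCone B := by
  rintro u ⟨-, p, -, h⟩
  refine ⟨⟪u, p⟫, fun x hx => ?_⟩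
  have := h x hx
  rw [inner_sub_right] at this
  linarith

lemma exists_mem_forall_inner_sub_nonneg [CompleteSpace E] (hconv : Convex ℝ B)
    (hclosed : IsClosed B) (hne : B.Nonempty) (y : E) :
    ∃ p ∈ B, ∀ x ∈ B, 0 ≤ ⟪p - y, x - p⟫ := by
  obtain ⟨p, hp, hmin⟩ := exists_norm_eq_iInf_of_complete_convex hne hclosed.isComplete hconv y
  refine ⟨p, hp, fun x hx => ?_⟩
  have := (norm_eq_iInf_iff_real_inner_le_zero hconv hp).1 hmin x hx
  rw [← neg_sub p y, inner_neg_left] at this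
  linarith

lemma innerNormalCone_nonempty [CompleteSpace E] (hconv : Convex ℝ B) (hclosed : IsClosed B)
    (hne : B.Nonempty) (hB : B ≠ univ) : (innerNormalCone B).Nonempty := by
  obtain ⟨y, hy⟩ := (ne_univ_iff_exists_notMem B).1 hB
  obtain ⟨p, hp, hproj⟩ := exists_mem_forall_inner_sub_nonneg hconv hclosed hne y
  exact ⟨p - y, mem_innerNormalCone_of_forall_inner_sub_nonneg
    (sub_ne_zero.2 fun h => hy (h ▸ hp)) hp hproj⟩

/-- `hν` is the nearest-point inequality at `x₀` for the projection `x₀ - r • u + ν` of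
`x₀ - r • u`, and `hc` a lower bound of `⟪u, ·⟫` at that projection; dividing by `r ^ 2` shows
`ν / r → u` as `r → ∞`. -/
lemma norm_sub_smul_sq_le {x₀ ν : E} {r c : ℝ} (hr : 0 ≤ r) (hν : 0 ≤ ⟪ν, r • u - ν⟫)
    (hc : c ≤ ⟪u, x₀ - r • u + ν⟫) : ‖ν - r • u‖ ^ 2 ≤ r * (⟪u, x₀⟫ - c) := by
  rw [inner_sub_right, inner_smul_right, real_inner_self_eq_norm_sq] at hν
  rw [inner_add_right, inner_sub_right, inner_smul_right, real_inner_self_eq_norm_sq,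
    real_inner_comm ν u] at hc
  rw [norm_sub_sq_real, inner_smul_right, norm_smul, Real.norm_eq_abs, abs_of_nonneg hr]
  nlinarith [mul_le_mul_of_nonneg_left hc hr]

lemma innerDual_closure [CompleteSpace E] (s : Set E) : innerDual (closure s) = innerDual s := by
  refine le_antisymm (innerDual_le_innerDual subset_closure) fun y hy => mem_innerDual.2 ?_
  have : closure s ⊆ {x | 0 ≤ ⟪x, y⟫} := closure_minimal (fun x hx => mem_innerDual.1 hy hx)
    (isClosed_le continuous_const (continuous_id.inner continuous_const))
  exact fun x hx => this hx

lemma coe_innerDual_innerDual [CompleteSpace E] (K : PointedCone ℝ E) :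
    (innerDual (innerDual (K : Set E) : Set E) : Set E) = closure K := by
  have := congrArg SetLike.coe (innerDual_innerDual (Submodule.closure K))
  simpa [innerDual_closure] using this

lemma exists_continuousLinearEquiv_inner_apply_eq [FiniteDimensional ℝ E]
    (form : E →ₗ[ℝ] E →ₗ[ℝ] ℝ) (hnd : ∀ x, (∀ y, form x y = 0) → x = 0) :
    ∃ Φ : E ≃L[ℝ] E, ∀ x y, ⟪Φ x, y⟫ = form x y := by
  set T := InnerProductSpace.continuousLinearMapOfBilin form.toContinuousBilinearMap
  have hT : ∀ x y, ⟪T x, y⟫ = form x y := fun x y =>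
    InnerProductSpace.continuousLinearMapOfBilin_apply _ x y
  have hinj : Function.Injective T := by
    rw [injective_iff_map_eq_zero]
    exact fun x hx => hnd x fun y => by rw [← hT, hx, inner_zero_left]
  exact ⟨(LinearEquiv.ofInjectiveEndo T.toLinearMap hinj).toContinuousLinearEquiv, hT⟩

end InnerProductSpace

section RecessionCone

variable {m : ℕ} {B : Set (EuclideanSpace ℝ (Fin m))}

lemma recessionCone_subset_innerDual_boundedBelowCone (hne : B.Nonempty) :
    recessionCone B ⊆ innerDual (boundedBelowCone B : Set (EuclideanSpace ℝ (Fin m))) := by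
  intro v hv
  refine mem_innerDual.2 ?_
  rintro u ⟨c, hc⟩
  obtain ⟨x, hx⟩ := hne
  have hline : ∀ t : ℝ, 0 ≤ t → c ≤ ⟪u, x⟫ + t * ⟪u, v⟫ := fun t ht => by
    simpa [inner_add_right, real_inner_smul_right] using hc _ (hv x hx t ht)
  by_contra! hneg
  set t := (⟪u, x⟫ - c + 1) / -⟪u, v⟫
  have ht : t * ⟪u, v⟫ = -(⟪u, x⟫ - c + 1) := by
    have : ⟪u, v⟫ ≠ 0 := hneg.ne
    simp only [t]
    field_simp
  have := hline t (div_nonneg (by linarith [hline 0 le_rfl]) (by linarith))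
  linarith

lemma innerDual_innerNormalCone_subset_recessionCone (hconv : Convex ℝ B) (hclosed : IsClosed B)
    (hne : B.Nonempty) :
    (innerDual (innerNormalCone B) : Set (EuclideanSpace ℝ (Fin m))) ⊆ recessionCone B := by
  intro v hv x hx t ht
  by_contra hy
  obtain ⟨p, hp, hproj⟩ := exists_mem_forall_inner_sub_nonneg hconv hclosed hne (x + t • v)
  have hν : p - (x + t • v) ≠ 0 := sub_ne_zero.2 fun h => hy (h ▸ hp)
  have hνv := mem_innerDual.1 hv (mem_innerNormalCone_of_forall_inner_sub_nonneg hν hp hproj)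
  have hνx := hproj x hx
  rw [show x - p = -(p - (x + t • v)) - t • v by abel, inner_sub_right, inner_neg_right,
    real_inner_self_eq_norm_sq, real_inner_smul_right] at hνx
  nlinarith [mul_nonneg ht hνv, pow_pos (norm_pos_iff.2 hν) 2]

lemma innerDual_boundedBelowCone_eq_recessionCone (hconv : Convex ℝ B) (hclosed : IsClosed B)
    (hne : B.Nonempty) :
    (innerDual (boundedBelowCone B : Set (EuclideanSpace ℝ (Fin m))) : Set _) =
      recessionCone B :=
  subset_antisymm
    (fun _ hv => innerDual_innerNormalCone_subset_recessionCone hconv hclosed hne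
      (innerDual_le_innerDual innerNormalCone_subset_boundedBelowCone hv))
    (recessionCone_subset_innerDual_boundedBelowCone hne)

lemma innerDual_innerNormalCone_eq_recessionCone (hconv : Convex ℝ B) (hclosed : IsClosed B)
    (hne : B.Nonempty) :
    (innerDual (innerNormalCone B) : Set (EuclideanSpace ℝ (Fin m))) = recessionCone B :=
  subset_antisymm (innerDual_innerNormalCone_subset_recessionCone hconv hclosed hne)
    fun _ hv => innerDual_le_innerDual innerNormalCone_subset_boundedBelowCone
      (recessionCone_subset_innerDual_boundedBelowCone hne hv)

lemma exists_mem_innerNormalCone_dist_sq_le (hconv : Convex ℝ B) (hclosed : IsClosed B)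
    {u x₀ : EuclideanSpace ℝ (Fin m)} {c r : ℝ} (hc : ∀ x ∈ B, c ≤ ⟪u, x⟫) (hx₀ : x₀ ∈ B)
    (hr : 0 < r) (hy : x₀ - r • u ∉ B) :
    ∃ w ∈ innerNormalCone B, dist u w ^ 2 ≤ (⟪u, x₀⟫ - c) / r := by
  obtain ⟨p, hp, hproj⟩ := exists_mem_forall_inner_sub_nonneg hconv hclosed ⟨x₀, hx₀⟩ (x₀ - r • u)
  obtain ⟨ν, rfl⟩ : ∃ ν, p = x₀ - r • u + ν := ⟨p - (x₀ - r • u), by abel⟩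
  rw [add_sub_cancel_left] at hproj
  have hν : ν ≠ 0 := by rintro rfl; exact hy (by simpa using hp)
  have hest : ‖ν - r • u‖ ^ 2 ≤ r * (⟪u, x₀⟫ - c) :=
    norm_sub_smul_sq_le hr.le (by convert hproj x₀ hx₀ using 2; abel) (hc _ hp)
  refine ⟨r⁻¹ • ν, smul_mem_innerNormalCone (inv_pos.2 hr)
    (mem_innerNormalCone_of_forall_inner_sub_nonneg hν hp hproj), ?_⟩
  have hdist : dist u (r⁻¹ • ν) = r⁻¹ * ‖ν - r • u‖ := by
    rw [dist_eq_norm', show r⁻¹ • ν - u = r⁻¹ • (ν - r • u) by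
      rw [smul_sub, smul_smul, inv_mul_cancel₀ hr.ne', one_smul],
      norm_smul, Real.norm_of_nonneg (inv_nonneg.2 hr.le)]
  calc dist u (r⁻¹ • ν) ^ 2 = r⁻¹ ^ 2 * ‖ν - r • u‖ ^ 2 := by rw [hdist, mul_pow]
    _ ≤ r⁻¹ ^ 2 * (r * (⟪u, x₀⟫ - c)) := by gcongr
    _ = (⟪u, x₀⟫ - c) / r := by field_simp

lemma boundedBelowCone_subset_closure_innerNormalCone (hconv : Convex ℝ B)
    (hclosed : IsClosed B) (hne : B.Nonempty) (hN : (innerNormalCone B).Nonempty) :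
    (boundedBelowCone B : Set (EuclideanSpace ℝ (Fin m))) ⊆ closure (innerNormalCone B) := by
  rintro u ⟨c, hc⟩
  rcases eq_or_ne u 0 with rfl | hu
  · exact zero_mem_closure_innerNormalCone hN
  obtain ⟨x₀, hx₀⟩ := hne
  refine Metric.mem_closure_iff.2 fun ε hε => ?_
  obtain ⟨r, hr⟩ := exists_gt (max 0 (max ((⟪u, x₀⟫ - c) / ε ^ 2) ((⟪u, x₀⟫ - c) / ‖u‖ ^ 2)))
  simp only [max_lt_iff, div_lt_iff₀ (by positivity : (0 : ℝ) < ε ^ 2),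
    div_lt_iff₀ (by positivity : (0 : ℝ) < ‖u‖ ^ 2)] at hr
  obtain ⟨hr0, hrε, hru⟩ := hr
  have hy : x₀ - r • u ∉ B := fun hy => by
    have := hc _ hy
    rw [inner_sub_right, real_inner_smul_right, real_inner_self_eq_norm_sq] at this
    linarith
  obtain ⟨w, hw, hdist⟩ := exists_mem_innerNormalCone_dist_sq_le hconv hclosed hc hx₀ hr0 hy
  refine ⟨w, hw, lt_of_pow_lt_pow_left₀ 2 hε.le (hdist.trans_lt ?_)⟩
  rw [div_lt_iff₀ hr0]
  linarith

lemma innerDual_recessionCone_eq_closure_innerNormalCone (hconv : Convex ℝ B)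
    (hclosed : IsClosed B) (hne : B.Nonempty) (hB : B ≠ univ) :
    (innerDual (recessionCone B) : Set (EuclideanSpace ℝ (Fin m))) =
      closure (innerNormalCone B) := by
  rw [← innerDual_boundedBelowCone_eq_recessionCone hconv hclosed hne, coe_innerDual_innerDual]
  exact subset_antisymm
    (closure_minimal (boundedBelowCone_subset_closure_innerNormalCone hconv hclosed hne
      (innerNormalCone_nonempty hconv hclosed hne hB)) isClosed_closure)
    (closure_mono innerNormalCone_subset_boundedBelowCone)

end RecessionCone

section BilinearForm

variable {m : ℕ} {form : EuclideanSpace ℝ (Fin m) →ₗ[ℝ] EuclideanSpace ℝ (Fin m) →ₗ[ℝ] ℝ}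
  {Φ : EuclideanSpace ℝ (Fin m) ≃L[ℝ] EuclideanSpace ℝ (Fin m)}

lemma dualCone_eq_preimage_innerDual (hΦ : ∀ x y, ⟪Φ x, y⟫ = form x y)
    (K : Set (EuclideanSpace ℝ (Fin m))) : dualCone form K = Φ ⁻¹' innerDual K := by
  ext v
  simp only [dualCone, mem_ofPred_eq, mem_preimage, SetLike.mem_coe, mem_innerDual, ← hΦ,
    real_inner_comm]

lemma dualCone_preimage_eq_innerDual (hΦ : ∀ x y, ⟪Φ x, y⟫ = form x y)
    (hsymm : ∀ x y, form x y = form y x) (S : Set (EuclideanSpace ℝ (Fin m))) :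
    dualCone form (Φ ⁻¹' S) = innerDual S := by
  ext v
  simp only [dualCone, mem_ofPred_eq, mem_preimage, SetLike.mem_coe, mem_innerDual]
  constructor
  · intro h u hu
    obtain ⟨w, rfl⟩ := Φ.surjective u
    rw [hΦ, ← hsymm]
    exact h w hu
  · intro h w hw
    rw [hsymm, ← hΦ]
    exact h hw

lemma normalCone_eq_preimage_innerNormalCone (hΦ : ∀ x y, ⟪Φ x, y⟫ = form x y)
    (hsymm : ∀ x y, form x y = form y x) (B : Set (EuclideanSpace ℝ (Fin m))) :
    normalCone form B = Φ ⁻¹' innerNormalCone B := by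
  ext w
  simp only [normalCone, innerNormalCone, mem_ofPred_eq, mem_preimage, ne_eq,
    EmbeddingLike.map_eq_zero_iff, hΦ, hsymm w]

end BilinearForm

theorem stmt_9_general {m : ℕ}
    (form : EuclideanSpace ℝ (Fin m) →ₗ[ℝ] EuclideanSpace ℝ (Fin m) →ₗ[ℝ] ℝ)
    (hsymm : ∀ x y, form x y = form y x)
    (hnd : ∀ x, (∀ y, form x y = 0) → x = 0)
    (B : Set (EuclideanSpace ℝ (Fin m)))
    (hconv : Convex ℝ B) (hclosed : IsClosed B) (hint : (interior B).Nonempty) :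
    dualCone form (normalCone form B) = recessionCone B ∧
    (B ≠ univ →
      dualCone form (recessionCone B) = closure (normalCone form B) ∧
      Convex ℝ (closure (normalCone form B)) ∧
      (∀ c : ℝ, 0 ≤ c → ∀ x ∈ closure (normalCone form B),
        c • x ∈ closure (normalCone form B))) := by
  have hne : B.Nonempty := hint.mono interior_subset
  obtain ⟨Φ, hΦ⟩ := exists_continuousLinearEquiv_inner_apply_eq form hnd
  have hN := normalCone_eq_preimage_innerNormalCone hΦ hsymm B
  refine ⟨by rw [hN, dualCone_preimage_eq_innerDual hΦ hsymm,
    innerDual_innerNormalCone_eq_recessionCone hconv hclosed hne], fun hB => ?_⟩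
  have hcl : closure (normalCone form B) =
      (((innerDual (recessionCone B)).comap (Φ : _ →L[ℝ] _) :
        ProperCone ℝ (EuclideanSpace ℝ (Fin m))) : Set (EuclideanSpace ℝ (Fin m))) := by
    rw [hN, ← Φ.preimage_closure,
      ← innerDual_recessionCone_eq_closure_innerNormalCone hconv hclosed hne hB]
    rfl
  refine ⟨by rw [hcl, dualCone_eq_preimage_innerDual hΦ]; rfl, hcl ▸ ProperCone.convex _,
    fun c hc x hx => ?_⟩
  rw [hcl] at hx ⊢
  exact ProperCone.smul_mem _ hx hc

theorem stmt_9 {m : ℕ} (hm : 1 ≤ m)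
    (form : EuclideanSpace ℝ (Fin m) →ₗ[ℝ] EuclideanSpace ℝ (Fin m) →ₗ[ℝ] ℝ)
    (hsymm : ∀ x y, form x y = form y x)
    (hnd : ∀ x, (∀ y, form x y = 0) → x = 0)
    (B : Set (EuclideanSpace ℝ (Fin m)))
    (hconv : Convex ℝ B) (hclosed : IsClosed B) (hint : (interior B).Nonempty) :
    dualCone form (normalCone form B) = recessionCone B ∧
    (B ≠ univ →
      dualCone form (recessionCone B) = closure (normalCone form B) ∧
      Convex ℝ (closure (normalCone form B)) ∧
      (∀ c : ℝ, 0 ≤ c → ∀ x ∈ closure (normalCone form B),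
        c • x ∈ closure (normalCone form B))) :=
  stmt_9_general form hsymm hnd B hconv hclosed hint
end
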